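/- Let Ψ : V → W be a morphism of FI-modules. Assume that W is centrally stable starting at E ≥ 0, that V is boundedly generated in degree E, and that Ψ_J : V_J → W_J is an isomorphism for every finite set J ⊆ ℕ with |J| ≤ E. Then Ψ_J is an isomorphism for every finite set J ⊆ ℕ. -/

import Mathlib

/-!
Induct on `|J|`; for `|J| ≤ E` there is nothing to prove.  For `|J| > E`, bounded generation
in degree `E` makes `ψ_V : ⊕_{|I| = |J|-1} V_I → V_J` surjective, and `ψ_W ∘ ⊕ Ψ_I = Ψ_J ∘ ψ_V`
by naturality, where the `Ψ_I` (and the `Ψ_K`, `|K| = |J| - 2`) are isomorphisms by induction.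
Surjectivity of `Ψ_J` then follows from that of `ψ_W`.  If `Ψ_J (ψ_V x) = 0`, then `⊕ Ψ_I x`
lies in `ker ψ_W = im η_W`, which is the image under `⊕ Ψ_I` of `im η_V`; as `⊕ Ψ_I` is
injective, `x ∈ im η_V ⊆ ker ψ_V`.
-/

universe u

open DirectSum

/-- The inclusion function `↥I → ↥J` of a pair of finite sets `I ⊆ J ⊆ ℕ`. -/
def finsetIncl {I J : Finset ℕ} (h : I ⊆ J) : I → J := fun x => ⟨x.1, h x.2⟩

theorem finsetIncl_injective {I J : Finset ℕ} (h : I ⊆ J) :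
    Function.Injective (finsetIncl h) := by
  intro a b hab
  exact Subtype.ext (congrArg (fun y : J => (y : ℕ)) hab :)

/-- An **FI-module**: a functor from the category of finite subsets of `ℕ` and injections to
the category of abelian groups. -/
structure FIModule where
  M : Finset ℕ → Type u
  [ab : ∀ I, AddCommGroup (M I)]
  map : ∀ {I J : Finset ℕ} (f : I → J), Function.Injective f → (M I →+ M J)
  map_id : ∀ I : Finset ℕ, map (id : I → I) (fun _ _ h => h) = AddMonoidHom.id (M I)
  map_comp : ∀ {I J K : Finset ℕ} (f : I → J) (g : J → K)
      (hf : Function.Injective f) (hg : Function.Injective g),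
      map (g ∘ f) (hg.comp hf) = (map g hg).comp (map f hf)

attribute [instance] FIModule.ab

/-- The homomorphism `W_I^J : W_I → W_J` induced by an inclusion `I ⊆ J`. -/
def FIModule.incl (W : FIModule.{u}) {I J : Finset ℕ} (h : I ⊆ J) : W.M I →+ W.M J :=
  W.map (finsetIncl h) (finsetIncl_injective h)

/-- `W` is *boundedly generated in degree `A`* if for every finite `J ⊆ ℕ` the map
`⊕_{I ⊆ J, |I| ≤ A} W_I → W_J` is surjective, i.e. `W_J` is the sum of the images of the
`W_I` with `I ⊆ J` and `|I| ≤ A`. -/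
def FIModule.BoundedlyGenerated (W : FIModule.{u}) (A : ℕ) : Prop :=
  ∀ J : Finset ℕ,
    (⨆ (I : Finset ℕ) (hI : I ⊆ J) (_ : I.card ≤ A),
      AddMonoidHom.range (W.incl hI)) = (⊤ : AddSubgroup (W.M J))

/-- The index set for the central stabilization at `J`: the subsets `I ⊆ J` with
`|I| = |J| - 1`. -/
def stabIdx (J : Finset ℕ) : Type :=
  {I : Finset ℕ // I ⊆ J ∧ I.card = J.card - 1}

instance (J : Finset ℕ) : DecidableEq (stabIdx J) := by
  unfold stabIdx; infer_instance

/-- The map `ψ : ⊕_{I ⊆ J, |I| = |J| - 1} W_I → W_J` induced by the maps `W_I^J`. -/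
def stabMap (W : FIModule.{u}) (J : Finset ℕ) :
    (⨁ i : stabIdx J, W.M i.1) →+ W.M J :=
  DirectSum.toAddMonoid fun i => W.incl i.2.1

/-- The image of the map
`η : ⊕_{K ⊆ J, |K| = |J| - 2} W_K → ⊕_{I ⊆ J, |I| = |J| - 1} W_I` whose `K`-component sends
`x` to `(W_K^{I₁}(x), -W_K^{I₂}(x))`, where `I₁, I₂` are the two sets between `K` and `J`.
The central stabilization `Stab(W, J)` is the cokernel of `η`. -/
def etaImage (W : FIModule.{u}) (J : Finset ℕ) :
    AddSubgroup (⨁ i : stabIdx J, W.M i.1) :=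
  AddSubgroup.closure
    {v | ∃ (K : Finset ℕ) (I₁ I₂ : stabIdx J) (hK1 : K ⊆ I₁.1) (hK2 : K ⊆ I₂.1),
      I₁ ≠ I₂ ∧ K.card = J.card - 2 ∧
      ∃ x : W.M K,
        v = DirectSum.of (fun i : stabIdx J => W.M i.1) I₁ (W.incl hK1 x)
          - DirectSum.of (fun i : stabIdx J => W.M i.1) I₂ (W.incl hK2 x)}

/-- `W` is *centrally stable at `J`*: the natural map `Stab(W, J) → W_J` from the central
stabilization is an isomorphism.  Unfolded: the map `ψ : ⊕_{|I| = |J| - 1} W_I → W_J` is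
surjective, and its kernel is exactly the image of `η` (so that
`Stab(W, J) = coker η → W_J` is bijective). -/
def FIModule.CentrallyStableAt (W : FIModule.{u}) (J : Finset ℕ) : Prop :=
  Function.Surjective (stabMap W J) ∧ AddMonoidHom.ker (stabMap W J) = etaImage W J

/-- `W` is *centrally stable starting at `E`* if the natural map `Stab(W, J) → W_J` is an
isomorphism for every finite `J ⊆ ℕ` with `|J| > E`. -/
def FIModule.CentrallyStable (W : FIModule.{u}) (E : ℕ) : Prop :=
  ∀ J : Finset ℕ, E < J.card → W.CentrallyStableAt J

namespace FIModule

theorem incl_incl (U : FIModule.{u}) {K I J : Finset ℕ} (hKI : K ⊆ I) (hIJ : I ⊆ J)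
    (x : U.M K) : U.incl hIJ (U.incl hKI x) = U.incl (hKI.trans hIJ) x :=
  (DFunLike.congr_fun (U.map_comp (finsetIncl hKI) (finsetIncl hIJ)
    (finsetIncl_injective hKI) (finsetIncl_injective hIJ)) x).symm

theorem etaImage_le_ker_stabMap (U : FIModule.{u}) (J : Finset ℕ) :
    etaImage U J ≤ (stabMap U J).ker := by
  refine (AddSubgroup.closure_le _).mpr ?_
  rintro _ ⟨K, I₁, I₂, hK₁, hK₂, -, -, x, rfl⟩
  simp [stabMap, incl_incl]

theorem stabMap_surjective_of_boundedlyGenerated {U : FIModule.{u}} {A : ℕ}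
    (hU : U.BoundedlyGenerated A) {J : Finset ℕ} (hJ : A < J.card) :
    Function.Surjective (stabMap U J) := by
  rw [← AddMonoidHom.range_eq_top, eq_top_iff, ← hU J]
  refine iSup₂_le fun I hI => iSup_le fun hIA => ?_
  rintro _ ⟨a, rfl⟩
  obtain ⟨I', hII', hI'J, hI'⟩ :=
    Finset.exists_subsuperset_card_eq (n := J.card - 1) hI (by omega) (by omega)
  exact ⟨of (fun i : stabIdx J => U.M i.1) ⟨I', hI'J, hI'⟩ (U.incl hII' a),
    (toAddMonoid_of (fun i : stabIdx J => U.incl i.2.1) _ _).trans (U.incl_incl hII' hI'J a)⟩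

section Morphism

variable {V W : FIModule.{u}}

def CommutesWithIncl (Ψ : ∀ I : Finset ℕ, V.M I →+ W.M I) : Prop :=
  ∀ {I J : Finset ℕ} (h : I ⊆ J) (x : V.M I), Ψ J (V.incl h x) = W.incl h (Ψ I x)

variable {Ψ : ∀ I : Finset ℕ, V.M I →+ W.M I}

theorem stabMap_map (hΨ : CommutesWithIncl Ψ) (J : Finset ℕ) (x : ⨁ i : stabIdx J, V.M i.1) :
    stabMap W J (DirectSum.map (fun i : stabIdx J => Ψ i.1) x) = Ψ J (stabMap V J x) := by
  induction x using DirectSum.induction_on with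
  | zero => simp
  | of i a => simp [stabMap, hΨ i.2.1]
  | add x y hx hy => simp only [map_add, hx, hy]

theorem etaImage_le_map (hΨ : CommutesWithIncl Ψ) {J : Finset ℕ}
    (hsurj : ∀ K : Finset ℕ, K.card = J.card - 2 → Function.Surjective (Ψ K)) :
    etaImage W J ≤ (etaImage V J).map (DirectSum.map fun i : stabIdx J => Ψ i.1) := by
  refine (AddSubgroup.closure_le _).mpr ?_
  rintro _ ⟨K, I₁, I₂, hK₁, hK₂, hne, hK, y, rfl⟩
  obtain ⟨z, rfl⟩ := hsurj K hK y
  exact ⟨_, AddSubgroup.subset_closure ⟨K, I₁, I₂, hK₁, hK₂, hne, hK, z, rfl⟩,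
    by simp [hΨ hK₁, hΨ hK₂]⟩

theorem surjective_of_stabMap_surjective (hΨ : CommutesWithIncl Ψ) {J : Finset ℕ}
    (hW : Function.Surjective (stabMap W J))
    (hsurj : ∀ I : stabIdx J, Function.Surjective (Ψ I.1)) :
    Function.Surjective (Ψ J) := by
  have hcomp : Ψ J ∘ stabMap V J = stabMap W J ∘ DirectSum.map fun i : stabIdx J => Ψ i.1 :=
    (funext (stabMap_map hΨ J)).symm
  refine Function.Surjective.of_comp (g := stabMap V J) ?_
  rw [hcomp]
  exact hW.comp ((DirectSum.map_surjective _).2 hsurj)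

theorem injective_of_ker_stabMap_le (hΨ : CommutesWithIncl Ψ) {J : Finset ℕ}
    (hV : Function.Surjective (stabMap V J))
    (hW : (stabMap W J).ker ≤ etaImage W J)
    (hinj : ∀ I : stabIdx J, Function.Injective (Ψ I.1))
    (hsurj : ∀ K : Finset ℕ, K.card = J.card - 2 → Function.Surjective (Ψ K)) :
    Function.Injective (Ψ J) := by
  rw [injective_iff_map_eq_zero]
  intro v hv
  obtain ⟨x, rfl⟩ := hV v
  have hx : DirectSum.map (fun i : stabIdx J => Ψ i.1) x ∈ etaImage W J :=
    hW (by rw [AddMonoidHom.mem_ker, stabMap_map hΨ, hv])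
  obtain ⟨x', hx', hxx'⟩ := etaImage_le_map hΨ hsurj hx
  rw [← (DirectSum.map_injective _).2 hinj hxx']
  exact etaImage_le_ker_stabMap V J hx'

theorem bijective_of_centrallyStableAt (hΨ : CommutesWithIncl Ψ) {J : Finset ℕ}
    (hJ : 0 < J.card) (hV : Function.Surjective (stabMap V J))
    (hW : W.CentrallyStableAt J)
    (hlow : ∀ I : Finset ℕ, I.card < J.card → Function.Bijective (Ψ I)) :
    Function.Bijective (Ψ J) := by
  have hstab : ∀ I : stabIdx J, Function.Bijective (Ψ I.1) :=
    fun I => hlow I.1 (by rw [I.2.2]; omega)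
  have hsurj : ∀ K : Finset ℕ, K.card = J.card - 2 → Function.Surjective (Ψ K) :=
    fun K hK => (hlow K (by omega)).2
  exact ⟨injective_of_ker_stabMap_le hΨ hV hW.2.le (fun I => (hstab I).1) hsurj,
    surjective_of_stabMap_surjective hΨ hW.1 fun I => (hstab I).2⟩

end Morphism

end FIModule

/-- **Central stability propagates along morphisms.**  Let `Ψ : V → W` be a morphism of
FI-modules.  If `W` is centrally stable starting at `E`, `V` is boundedly generated in degree
`E`, and `Ψ_J` is an isomorphism for all finite `J ⊆ ℕ` with `|J| ≤ E`, then `Ψ_J` is an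
isomorphism for every finite set `J ⊆ ℕ`. -/
theorem stmt16 (V W : FIModule.{u}) (E : ℕ)
    (Ψ : ∀ I : Finset ℕ, V.M I →+ W.M I)
    (hnat : ∀ {I J : Finset ℕ} (f : I → J) (hf : Function.Injective f),
      (Ψ J).comp (V.map f hf) = (W.map f hf).comp (Ψ I))
    (hW : W.CentrallyStable E)
    (hV : V.BoundedlyGenerated E)
    (hiso : ∀ J : Finset ℕ, J.card ≤ E → Function.Bijective (Ψ J)) :
    ∀ J : Finset ℕ, Function.Bijective (Ψ J) := by
  have hΨ : FIModule.CommutesWithIncl Ψ :=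
    fun h x => DFunLike.congr_fun (hnat (finsetIncl h) (finsetIncl_injective h)) x
  suffices ∀ n, ∀ J : Finset ℕ, J.card = n → Function.Bijective (Ψ J) from
    fun J => this _ J rfl
  intro n
  induction n using Nat.strong_induction_on with
  | _ n ih =>
    rintro J rfl
    rcases le_or_gt J.card E with hJ | hJ
    · exact hiso J hJ
    · exact FIModule.bijective_of_centrallyStableAt hΨ (by omega)
        (FIModule.stabMap_surjective_of_boundedlyGenerated hV hJ) (hW J hJ)
        fun I hI => ih _ hI I rfl
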